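/- Let n ≥ 1 and p ∈ (0,1]. There exists a constant C ≥ 1 such that for all x ∈ ℝ^n and t ∈ (0,∞): (a) if p ∈ (0,1) and n(1/p-1) ∉ ℕ, then C^{-1}·t/(1+[t(1+|x|)^n]^{1-p}) ≤ Φ_p(x,t) ≤ C·t/(1+[t(1+|x|)^n]^{1-p}); (b) if p ∈ (0,1) and n(1/p-1) ∈ ℕ, then C^{-1}·t/(1+[t(1+|x|)^n]^{1-p}[log(e+|x|)]^p) ≤ Φ_p(x,t) ≤ C·t/(1+[t(1+|x|)^n]^{1-p}[log(e+|x|)]^p); (c) if p = 1, then C^{-1}·t/(log(e+t)+log(e+|x|)) ≤ Φ_1(x,t) ≤ C·t/(log(e+t)+log(e+|x|)). -/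

import Mathlib

open MeasureTheory Real
open scoped ENNReal Classical

noncomputable section

/-- `ℝⁿ` as a Euclidean space. -/
abbrev Rn (n : ℕ) := EuclideanSpace ℝ (Fin n)

/-- The Musielak-Orlicz growth function `Φ_p`. -/
def Phi (n : ℕ) (p : ℝ) (x : Rn n) (t : ℝ) : ℝ :=
  if ∃ k : ℕ, (n : ℝ) * (1 / p - 1) = (k : ℝ) then
    t / (Real.log (Real.exp 1 + t) +
      (t * (1 + ‖x‖) ^ (n : ℝ)) ^ (1 - p) * (Real.log (Real.exp 1 + ‖x‖)) ^ p)
  else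
    t / (Real.log (Real.exp 1 + t) + (t * (1 + ‖x‖) ^ (n : ℝ)) ^ (1 - p))

/-- The Orlicz function `φ₀(t) = t / log(e+t)`. -/
def phi0 (t : ℝ) : ℝ := t / Real.log (Real.exp 1 + t)

/-- The weight `W_p`. -/
def Wp (n : ℕ) (p : ℝ) (x : Rn n) : ℝ :=
  if p = 1 then 1 / Real.log (Real.exp 1 + ‖x‖)
  else if ∃ k : ℕ, (n : ℝ) * (1 / p - 1) = (k : ℝ) then
    (1 + ‖x‖) ^ (-(n : ℝ) * (1 - p)) * (Real.log (Real.exp 1 + ‖x‖)) ^ (-p)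
  else (1 + ‖x‖) ^ (-(n : ℝ) * (1 - p))

/-- Extension of `Φ_p(x, ·)` to `ℝ≥0∞`. -/
def PhiE (n : ℕ) (p : ℝ) (x : Rn n) (t : ℝ≥0∞) : ℝ≥0∞ :=
  if t = ⊤ then ⊤ else ENNReal.ofReal (Phi n p x t.toReal)

/-- Extension of `φ₀` to `ℝ≥0∞`. -/
def phi0E (t : ℝ≥0∞) : ℝ≥0∞ :=
  if t = ⊤ then ⊤ else ENNReal.ofReal (phi0 t.toReal)

/-- The Luxemburg quasi-norm `‖·‖_{L^{Φ_p}}`. -/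
def luxPhiNorm (n : ℕ) (p : ℝ) (F : Rn n → ℝ≥0∞) : ℝ≥0∞ :=
  sInf {lam : ℝ≥0∞ | 0 < lam ∧ (∫⁻ x : Rn n, PhiE n p x (F x / lam)) ≤ 1}

/-- The Luxemburg norm `‖·‖_{L^{φ₀}}`. -/
def luxPhi0Norm (n : ℕ) (F : Rn n → ℝ≥0∞) : ℝ≥0∞ :=
  sInf {lam : ℝ≥0∞ | 0 < lam ∧ (∫⁻ x : Rn n, phi0E (F x / lam)) ≤ 1}

/-- The weighted quasi-norm `‖·‖_{L^p_{W_p}}`. -/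
def wNorm (n : ℕ) (p : ℝ) (F : Rn n → ℝ≥0∞) : ℝ≥0∞ :=
  (∫⁻ x : Rn n, F x ^ p * ENNReal.ofReal (Wp n p x)) ^ (1 / p)

/-- The weighted norm `‖·‖_{L^1_{W_1}}`. -/
def w1Norm (n : ℕ) (F : Rn n → ℝ≥0∞) : ℝ≥0∞ :=
  ∫⁻ x : Rn n, F x * ENNReal.ofReal (Wp n 1 x)

/-- The characteristic function of a set, `ℝ≥0∞`-valued. -/
def chi (n : ℕ) (B : Set (Rn n)) : Rn n → ℝ≥0∞ := B.indicator fun _ => 1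


/-!
For `0 < s ≤ 1` the logarithm is dominated by a power: `log (e + t) ≤ (e + t ^ s) / s`.
Hence, as soon as the second summand `D` of the denominator of `Φ_p(x, t)` dominates `t ^ (1 - p)`,
which holds for `p < 1` because `(1 + |x|) ^ n ≥ 1` and `log (e + |x|) ≥ 1`, replacing `log (e + t)`
by `1` changes the denominator by at most the factor `1 + e / (1 - p)`. For `p = 1` the two
sides of (c) coincide.
-/

lemma one_le_log_exp_one_add {t : ℝ} (ht : 0 ≤ t) : 1 ≤ log (exp 1 + t) := by
  calc 1 = log (exp 1) := (log_exp 1).symm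
    _ ≤ log (exp 1 + t) := log_le_log (exp_pos 1) (by linarith)

lemma log_exp_one_add_le {s t : ℝ} (hs0 : 0 < s) (hs1 : s ≤ 1) (ht : 0 ≤ t) :
    log (exp 1 + t) ≤ (exp 1 + t ^ s) / s := by
  have hexp : exp 1 ^ s ≤ exp 1 :=
    rpow_le_self_of_one_le (one_le_exp zero_le_one) hs1
  calc log (exp 1 + t) ≤ (exp 1 + t) ^ s / s := log_le_rpow_div (by positivity) hs0
    _ ≤ (exp 1 ^ s + t ^ s) / s := by
      gcongr; exact rpow_add_le_add_rpow (exp_pos 1).le ht hs0.le hs1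
    _ ≤ (exp 1 + t ^ s) / s := by gcongr

lemma inv_mul_div_le_div_and_div_le_mul_div {C t L D : ℝ} (ht : 0 ≤ t) (hL : 1 ≤ L) (hD : 0 ≤ D)
    (h : L + D ≤ C * (1 + D)) :
    C⁻¹ * (t / (1 + D)) ≤ t / (L + D) ∧ t / (L + D) ≤ C * (t / (1 + D)) := by
  have hC : 1 ≤ C := by nlinarith
  constructor
  · rw [inv_mul_eq_div, div_div, mul_comm]
    exact div_le_div_of_nonneg_left ht (by positivity) h
  · calc t / (L + D) ≤ t / (1 + D) := div_le_div_of_nonneg_left ht (by positivity) (by linarith)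
      _ ≤ C * (t / (1 + D)) := le_mul_of_one_le_left (by positivity) hC

lemma div_log_exp_one_add_comparable {s t D : ℝ} (hs0 : 0 < s) (hs1 : s ≤ 1) (ht : 0 ≤ t)
    (hD : t ^ s ≤ D) :
    (1 + exp 1 / s)⁻¹ * (t / (1 + D)) ≤ t / (log (exp 1 + t) + D) ∧
      t / (log (exp 1 + t) + D) ≤ (1 + exp 1 / s) * (t / (1 + D)) := by
  have hD0 : 0 ≤ D := (rpow_nonneg ht s).trans hD
  refine inv_mul_div_le_div_and_div_le_mul_div ht (one_le_log_exp_one_add ht) hD0 ?_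
  have hlog := log_exp_one_add_le hs0 hs1 ht
  have hDs : D / s ≤ exp 1 * D / s := by
    gcongr; exact le_mul_of_one_le_left hD0 (one_le_exp zero_le_one)
  calc log (exp 1 + t) + D ≤ exp 1 / s + D / s + D := by
        rw [add_div] at hlog; gcongr; exact hlog.trans (by gcongr)
    _ ≤ (1 + exp 1 / s) * (1 + D) := by
        rw [mul_div_right_comm] at hDs; nlinarith

lemma rpow_le_mul_one_add_norm_rpow {n : ℕ} {s t : ℝ} (hs : 0 ≤ s) (ht : 0 ≤ t) (x : Rn n) :
    t ^ s ≤ (t * (1 + ‖x‖) ^ (n : ℝ)) ^ s := by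
  apply rpow_le_rpow ht _ hs
  exact le_mul_of_one_le_right ht (one_le_rpow (by linarith [norm_nonneg x]) (by positivity))

lemma Phi_one (n : ℕ) (x : Rn n) (t : ℝ) :
    Phi n 1 x t = t / (log (exp 1 + t) + log (exp 1 + ‖x‖)) := by
  rw [Phi, if_pos ⟨0, by norm_num⟩]
  simp

theorem statement17_general (n : ℕ) (p : ℝ) (hp0 : 0 < p) (hp1 : p ≤ 1) :
    ∃ C : ℝ, 1 ≤ C ∧ ∀ (x : Rn n) (t : ℝ), 0 < t →
      ((p < 1 ∧ ¬ ∃ k : ℕ, (n : ℝ) * (1 / p - 1) = (k : ℝ)) →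
        C⁻¹ * (t / (1 + (t * (1 + ‖x‖) ^ (n : ℝ)) ^ (1 - p))) ≤ Phi n p x t ∧
        Phi n p x t ≤ C * (t / (1 + (t * (1 + ‖x‖) ^ (n : ℝ)) ^ (1 - p)))) ∧
      ((p < 1 ∧ ∃ k : ℕ, (n : ℝ) * (1 / p - 1) = (k : ℝ)) →
        C⁻¹ * (t / (1 + (t * (1 + ‖x‖) ^ (n : ℝ)) ^ (1 - p) *
            (Real.log (Real.exp 1 + ‖x‖)) ^ p)) ≤ Phi n p x t ∧
        Phi n p x t ≤ C * (t / (1 + (t * (1 + ‖x‖) ^ (n : ℝ)) ^ (1 - p) *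
            (Real.log (Real.exp 1 + ‖x‖)) ^ p))) ∧
      (p = 1 →
        C⁻¹ * (t / (Real.log (Real.exp 1 + t) + Real.log (Real.exp 1 + ‖x‖))) ≤ Phi n p x t ∧
        Phi n p x t ≤
          C * (t / (Real.log (Real.exp 1 + t) + Real.log (Real.exp 1 + ‖x‖)))) := by
  rcases hp1.lt_or_eq with hp | rfl
  · have hs : 0 < 1 - p := sub_pos.mpr hp
    refine ⟨1 + exp 1 / (1 - p), by linarith [div_pos (exp_pos 1) hs], fun x t ht => ?_⟩
    have hA := rpow_le_mul_one_add_norm_rpow hs.le ht.le x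
    refine ⟨fun ⟨_, hk⟩ => ?_, fun ⟨_, hk⟩ => ?_, fun h => absurd h hp.ne⟩
    · rw [Phi, if_neg hk]
      exact div_log_exp_one_add_comparable hs (by linarith) ht.le hA
    · have hB : 1 ≤ log (exp 1 + ‖x‖) ^ p :=
        one_le_rpow (one_le_log_exp_one_add (norm_nonneg x)) hp0.le
      rw [Phi, if_pos hk]
      exact div_log_exp_one_add_comparable hs (by linarith) ht.le
        (hA.trans (le_mul_of_one_le_right (by positivity) hB))
  · refine ⟨1, le_rfl, fun x t _ => ⟨fun h => absurd h.1 (lt_irrefl 1),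
      fun h => absurd h.1 (lt_irrefl 1), fun _ => ?_⟩⟩
    simp [Phi_one]

/-- Pointwise equivalent expressions for `Φ_p(x, t)`, `t > 0`. -/
theorem statement17 (n : ℕ) (hn : 1 ≤ n) (p : ℝ) (hp0 : 0 < p) (hp1 : p ≤ 1) :
    ∃ C : ℝ, 1 ≤ C ∧ ∀ (x : Rn n) (t : ℝ), 0 < t →
      ((p < 1 ∧ ¬ ∃ k : ℕ, (n : ℝ) * (1 / p - 1) = (k : ℝ)) →
        C⁻¹ * (t / (1 + (t * (1 + ‖x‖) ^ (n : ℝ)) ^ (1 - p))) ≤ Phi n p x t ∧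
        Phi n p x t ≤ C * (t / (1 + (t * (1 + ‖x‖) ^ (n : ℝ)) ^ (1 - p)))) ∧
      ((p < 1 ∧ ∃ k : ℕ, (n : ℝ) * (1 / p - 1) = (k : ℝ)) →
        C⁻¹ * (t / (1 + (t * (1 + ‖x‖) ^ (n : ℝ)) ^ (1 - p) *
            (Real.log (Real.exp 1 + ‖x‖)) ^ p)) ≤ Phi n p x t ∧
        Phi n p x t ≤ C * (t / (1 + (t * (1 + ‖x‖) ^ (n : ℝ)) ^ (1 - p) *
            (Real.log (Real.exp 1 + ‖x‖)) ^ p))) ∧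
      (p = 1 →
        C⁻¹ * (t / (Real.log (Real.exp 1 + t) + Real.log (Real.exp 1 + ‖x‖))) ≤ Phi n p x t ∧
        Phi n p x t ≤
          C * (t / (Real.log (Real.exp 1 + t) + Real.log (Real.exp 1 + ‖x‖)))) :=
  statement17_general n p hp0 hp1
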